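/- Let f : {0,1}^{k+1} → {0,1}. For b ∈ {0,1}^k, let U_{[b]} denote the uniform distribution on {(x, x·b) : x ∈ {0,1}^k} ⊆ {0,1}^{k+1}, where x·b is the inner product mod 2, and let U_{k+1} be uniform on {0,1}^{k+1}. Then Σ_{b ∈ {0,1}^k} ‖f(U_{k+1}) − f(U_{[b]})‖² ≤ E_{x ∼ U_{k+1}}[f(x)] ≤ 1. -/

import Mathlib

/-!
With `e x = f (x, 1) - f (x, 0)`, the gap `E_{U_{k+1}}[f] - E_{U_{[b]}}[f]` equals
`2^{-(k+1)} Σ_x e x (-1)^{x·b}`, i.e. up to normalisation the Fourier coefficient of `f` at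
`S_b ∪ {k+1}`. Parseval (orthogonality of the characters `x ↦ (-1)^{x·b}`) turns the sum of the
squared gaps into `2^k Σ_x (e x)^2 / 4^{k+1}`, and `(e x)^2 ≤ f (x, 1) + f (x, 0)` bounds this by
half the mean of `f`.
-/

open Finset

/-- Inner product mod 2 of two Boolean vectors. -/
def ip {k : ℕ} (x b : Fin k → Bool) : Bool :=
  decide ((Finset.univ.filter (fun i => x i && b i)).card % 2 = 1)

def boolSign (t : Bool) : ℝ := if t then -1 else 1

@[simp] lemma boolSign_false : boolSign false = 1 := rfl
@[simp] lemma boolSign_true : boolSign true = -1 := rfl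

lemma boolSign_xor (s t : Bool) : boolSign (s ^^ t) = boolSign s * boolSign t := by
  cases s <;> cases t <;> norm_num

lemma boolSign_ip {k : ℕ} (x b : Fin k → Bool) :
    boolSign (ip x b) = ∏ i, boolSign (x i && b i) := by
  simp only [boolSign, ip, prod_ite, prod_const, one_pow, mul_one, neg_one_pow_eq_ite,
    Nat.even_iff, decide_eq_true_eq]
  split_ifs <;> first | rfl | omega

lemma boolSign_ip_mul_boolSign_ip {k : ℕ} (x y b : Fin k → Bool) :
    boolSign (ip x b) * boolSign (ip y b) = boolSign (ip (fun i => x i ^^ y i) b) := by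
  simp only [boolSign_ip, ← prod_mul_distrib, ← boolSign_xor, Bool.and_xor_distrib_right]

lemma sum_boolSign_ip {k : ℕ} (w : Fin k → Bool) :
    ∑ b, boolSign (ip w b) = if w = (fun _ => false) then (2 : ℝ) ^ k else 0 := by
  have hfactor (i : Fin k) : ∑ v, boolSign (w i && v) = if w i then 0 else 2 := by
    cases w i <;> norm_num
  simp_rw [boolSign_ip]
  rw [← Fintype.prod_sum (fun i v => boolSign (w i && v)), Fintype.prod_congr _ _ hfactor]
  split_ifs with hw
  · simp [hw]
  · obtain ⟨i, hi⟩ : ∃ i, w i = true := by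
      by_contra! h
      exact hw (funext fun i => by simpa using h i)
    exact prod_eq_zero (mem_univ i) (by simp [hi])

lemma sum_boolSign_ip_mul_boolSign_ip {k : ℕ} (x y : Fin k → Bool) :
    ∑ b, boolSign (ip x b) * boolSign (ip y b) = if x = y then (2 : ℝ) ^ k else 0 := by
  simp_rw [boolSign_ip_mul_boolSign_ip, sum_boolSign_ip]
  congr 1
  simp [funext_iff]

def walshTransform {k : ℕ} (g : (Fin k → Bool) → ℝ) (b : Fin k → Bool) : ℝ :=
  ∑ x, g x * boolSign (ip x b)

theorem sum_walshTransform_sq {k : ℕ} (g : (Fin k → Bool) → ℝ) :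
    ∑ b, walshTransform g b ^ 2 = 2 ^ k * ∑ x, g x ^ 2 := by
  calc ∑ b, walshTransform g b ^ 2
      = ∑ x, ∑ y, g x * g y * ∑ b, boolSign (ip x b) * boolSign (ip y b) := by
        simp_rw [walshTransform, sq, sum_mul_sum, mul_sum]
        rw [sum_comm]
        refine sum_congr rfl fun x _ => ?_
        rw [sum_comm]
        exact sum_congr rfl fun y _ => sum_congr rfl fun b _ => by ring
    _ = 2 ^ k * ∑ x, g x ^ 2 := by
        simp_rw [sum_boolSign_ip_mul_boolSign_ip, mul_ite, mul_zero, sum_ite_eq, mem_univ,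
          if_true, mul_sum]
        exact sum_congr rfl fun x _ => by ring

def fiberDiff {k : ℕ} (f : (Fin k → Bool) × Bool → Bool) (x : Fin k → Bool) : ℝ :=
  (if f (x, true) then 1 else 0) - (if f (x, false) then 1 else 0)

lemma mean_sub_mean_ip_eq_walshTransform {k : ℕ} (f : (Fin k → Bool) × Bool → Bool)
    (b : Fin k → Bool) :
    (∑ z, if f z then (1 : ℝ) else 0) / 2 ^ (k + 1) -
        (∑ x, if f (x, ip x b) then (1 : ℝ) else 0) / 2 ^ k =
      walshTransform (fiberDiff f) b / 2 ^ (k + 1) := by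
  have hfiber (x : Fin k → Bool) (t : Bool) :
      (∑ s, if f (x, s) then (1 : ℝ) else 0) - 2 * (if f (x, t) then 1 else 0) =
        fiberDiff f x * boolSign t := by
    cases t <;> simp only [Fintype.sum_bool, fiberDiff, boolSign_false, boolSign_true] <;> ring
  have hnumerator : (∑ z, if f z then (1 : ℝ) else 0) -
      2 * (∑ x, if f (x, ip x b) then (1 : ℝ) else 0) = walshTransform (fiberDiff f) b := by
    rw [Fintype.sum_prod_type, mul_sum, ← sum_sub_distrib]
    exact sum_congr rfl fun x _ => hfiber x (ip x b)
  rw [← hnumerator, pow_succ]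
  field_simp

lemma sum_fiberDiff_sq_le {k : ℕ} (f : (Fin k → Bool) × Bool → Bool) :
    ∑ x, fiberDiff f x ^ 2 ≤ ∑ z, if f z then (1 : ℝ) else 0 := by
  rw [Fintype.sum_prod_type]
  refine sum_le_sum fun x _ => ?_
  simp only [fiberDiff, Fintype.sum_bool]
  split_ifs <;> norm_num

theorem stmt5 (k : ℕ) (f : ((Fin k → Bool) × Bool) → Bool) :
    (∑ b : Fin k → Bool,
      ((∑ z : (Fin k → Bool) × Bool, if f z then (1:ℝ) else 0) / 2 ^ (k+1) -
        (∑ x : Fin k → Bool, if f (x, ip x b) then (1:ℝ) else 0) / 2 ^ k) ^ 2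
      ≤ (∑ z : (Fin k → Bool) × Bool, if f z then (1:ℝ) else 0) / 2 ^ (k+1)) ∧
    (∑ z : (Fin k → Bool) × Bool, if f z then (1:ℝ) else 0) / 2 ^ (k+1) ≤ 1 := by
  set T : ℝ := ∑ z : (Fin k → Bool) × Bool, if f z then (1:ℝ) else 0
  have hT : 0 ≤ T := sum_nonneg fun z _ => by positivity
  constructor
  · calc ∑ b, (T / 2 ^ (k + 1) - (∑ x, if f (x, ip x b) then (1:ℝ) else 0) / 2 ^ k) ^ 2
        = (2 ^ k * ∑ x, fiberDiff f x ^ 2) / (2 ^ (k + 1)) ^ 2 := by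
          simp_rw [T, mean_sub_mean_ip_eq_walshTransform, div_pow, ← sum_div,
            sum_walshTransform_sq]
      _ ≤ 2 ^ k * T / (2 ^ (k + 1)) ^ 2 := by gcongr; exact sum_fiberDiff_sq_le f
      _ = T / 2 ^ (k + 1) / 2 := by field_simp; ring
      _ ≤ T / 2 ^ (k + 1) := half_le_self (by positivity)
  · have hT_le_card : T ≤ ∑ _z : (Fin k → Bool) × Bool, (1 : ℝ) :=
      sum_le_sum fun z _ => by split_ifs <;> norm_num
    rw [div_le_one (by positivity)]
    simpa [pow_succ] using hT_le_card
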